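/- arXiv:1602.01630 — 4 statements merged into one kernel-verified Lean document; each statement's English description precedes it below -/
import Mathlib

section
/- For every integer n ≥ 2 there exist constants c₃ > 0, c₄ > 0 and Q₀ = Q₀(n) such that for every integer Q > Q₀ and every interval I ⊆ [-1/2, 1/2] of length |I| ≥ c₃·Q^{-1}, the interval I contains at least c₄·Q^n·|I| real algebraic integers α of degree exactly n and height H(α) ≤ Q. -/
/-!
Fix an even `A ≈ Q/2` and consider `P = Xⁿ + A X + Σ_{1 ≤ i < n} 2κᵢ Xⁱ + c` with
`0 ≤ κᵢ ≤ K ≈ Q/(32n)` and `c ≡ 2 (mod 4)`. Such a `P` is Eisenstein at `2`, so irreducible,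
and distinct choices of `(κ, c)` give distinct minimal polynomials, hence distinct roots.
On `[-1/2, 1/2]` the linear term dominates, so `P - c` increases with slope at least `Q/4`;
for a fixed `κ`, about `Q |I| / 32` consecutive admissible values of `c` therefore each put
a root of `P` in `I`, and all coefficients stay below `Q`. This gives
`≫ Kⁿ⁻¹ · Q |I| ≫ Qⁿ |I|` algebraic integers in `I`.
-/

open Polynomial

def IsRealAlgIntOfHt (n : ℕ) (Q : ℤ) (α : ℝ) : Prop :=
  ∃ P : ℤ[X], P.Monic ∧ P.natDegree = n ∧
    Irreducible (P.map (algebraMap ℤ ℚ)) ∧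
    (∀ j, |P.coeff j| ≤ Q) ∧ Polynomial.aeval α P = 0

namespace Polynomial

theorem Monic.irreducible_map_of_eisenstein {R K : Type*} [CommRing R] [IsDomain R]
    [IsIntegrallyClosed R] [Field K] [Algebra R K] [IsFractionRing R K] {f : R[X]}
    (hf : f.Monic) (hdeg : 0 < f.natDegree) {p : R} (hp : Prime p)
    (hcoeff : ∀ i < f.natDegree, p ∣ f.coeff i) (h0 : ¬ p ^ 2 ∣ f.coeff 0) :
    Irreducible (f.map (algebraMap R K)) := by
  rw [← hf.irreducible_iff_irreducible_map_fraction_map]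
  refine irreducible_of_eisenstein_criterion (P := Ideal.span {p})
    ((Ideal.span_singleton_prime hp.ne_zero).2 hp) ?_ ?_ (natDegree_pos_iff_degree_pos.mp hdeg)
    ?_ hf.isPrimitive
  · rw [hf.leadingCoeff, Ideal.mem_span_singleton]
    exact hp.not_dvd_one
  · exact fun i hi => Ideal.mem_span_singleton.2 (hcoeff i (coe_lt_degree.mp hi))
  · rwa [Ideal.span_singleton_pow, Ideal.mem_span_singleton]

theorem Monic.eq_of_aeval_eq_zero_of_irreducible_map {R K B : Type*} [CommRing R] [Field K]
    [Ring B] [Nontrivial B] [Algebra R K] [Algebra K B] [Algebra R B] [IsScalarTower R K B]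
    (hinj : Function.Injective (algebraMap R K)) {f g : R[X]}
    (hf : f.Monic) (hg : g.Monic) (hfi : Irreducible (f.map (algebraMap R K)))
    (hgi : Irreducible (g.map (algebraMap R K))) {α : B} (hfα : aeval α f = 0)
    (hgα : aeval α g = 0) : f = g := by
  refine map_injective _ hinj ?_
  rw [minpoly.eq_of_irreducible_of_monic (x := α) hfi (by rwa [aeval_map_algebraMap]) (hf.map _),
    minpoly.eq_of_irreducible_of_monic (x := α) hgi (by rwa [aeval_map_algebraMap]) (hg.map _)]

end Polynomial

theorem Finset.exists_card_eq_of_exists_of_unique {ι α : Type*} (T : Finset ι) (P : ι → α → Prop)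
    (hex : ∀ t ∈ T, ∃ x, P t x) (huniq : ∀ t ∈ T, ∀ t' ∈ T, ∀ x, P t x → P t' x → t = t') :
    ∃ S : Finset α, (∀ x ∈ S, ∃ t ∈ T, P t x) ∧ S.card = T.card := by
  classical
  choose f hf using hex
  refine ⟨T.attach.image fun t => f t.1 t.2, fun x hx => ?_, ?_⟩
  · obtain ⟨t, -, rfl⟩ := mem_image.mp hx
    exact ⟨t.1, t.2, hf t.1 t.2⟩
  · refine (card_image_of_injective _ fun t t' h => ?_).trans T.card_attach
    exact Subtype.ext (huniq t.1 t.2 t'.1 t'.2 _ (hf t.1 t.2) (h ▸ hf t'.1 t'.2))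

theorem abs_pow_sub_pow_le_abs_sub {α : Type*} [Field α] [LinearOrder α] [IsStrictOrderedRing α]
    {x y : α} (hx : |x| ≤ 1 / 2) (hy : |y| ≤ 1 / 2) (k : ℕ) : |y ^ k - x ^ k| ≤ |y - x| := by
  have hk : (k : α) * (1 / 2) ^ (k - 1) ≤ 1 := by
    rw [one_div_pow, mul_one_div, div_le_one (by positivity)]
    have := Nat.lt_two_pow_self (n := k - 1)
    exact_mod_cast (by omega : k ≤ 2 ^ (k - 1))
  have hmax : max |y| |x| ≤ 1 / 2 := max_le hy hx
  calc |y ^ k - x ^ k| ≤ |y - x| * k * max |y| |x| ^ (k - 1) := abs_pow_sub_pow_le ..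
    _ ≤ |y - x| * (k * (1 / 2) ^ (k - 1)) := by rw [mul_assoc]; gcongr
    _ ≤ |y - x| := mul_le_of_le_one_right (abs_nonneg _) hk

noncomputable def familyPoly (n : ℕ) (A : ℤ) (w : Fin (n - 1) → ℤ) : ℤ[X] :=
  X ^ n + X * (C A + ofFn (n - 1) w)

section familyPoly

variable {n : ℕ} {A : ℤ} {w : Fin (n - 1) → ℤ}

theorem coeff_familyPoly_zero (hn : 1 ≤ n) : (familyPoly n A w).coeff 0 = 0 := by
  rw [familyPoly, coeff_add, coeff_X_pow, if_neg (by omega), coeff_X_mul_zero, add_zero]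

theorem coeff_familyPoly_succ {i : ℕ} (hi : i < n - 1) :
    (familyPoly n A w).coeff (i + 1) = (if i = 0 then A else 0) + w ⟨i, hi⟩ := by
  rw [familyPoly, coeff_add, coeff_X_pow, if_neg (by omega), coeff_X_mul, coeff_add, coeff_C,
    ofFn_coeff_eq_val_of_lt _ hi, zero_add]

theorem coeff_familyPoly_of_le (hn : 2 ≤ n) {t : ℕ} (ht : n ≤ t) :
    (familyPoly n A w).coeff t = if t = n then 1 else 0 := by
  obtain ⟨s, rfl⟩ : ∃ s, t = s + 1 := ⟨t - 1, by omega⟩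
  rw [familyPoly, coeff_add, coeff_X_pow, coeff_X_mul, coeff_add, coeff_C,
    if_neg (show s ≠ 0 by omega), ofFn_coeff_eq_zero_of_ge _ (by omega), add_zero, add_zero]

theorem natDegree_familyPoly_add_C (hn : 2 ≤ n) (c : ℤ) :
    (familyPoly n A w + C c).natDegree = n := by
  refine natDegree_eq_of_le_of_coeff_ne_zero (natDegree_le_iff_coeff_eq_zero.mpr fun t ht => ?_) ?_
  · rw [coeff_add, coeff_C, if_neg (by omega), coeff_familyPoly_of_le hn ht.le, if_neg ht.ne',
      add_zero]
  · rw [coeff_add, coeff_C, if_neg (by omega), coeff_familyPoly_of_le hn le_rfl, if_pos rfl]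
    exact one_ne_zero

theorem coeff_familyPoly_add_C_zero (hn : 1 ≤ n) (c : ℤ) :
    (familyPoly n A w + C c).coeff 0 = c := by
  rw [coeff_add, coeff_familyPoly_zero hn, coeff_C_zero, zero_add]

theorem coeff_familyPoly_add_C_succ {i : ℕ} (hi : i < n - 1) (c : ℤ) :
    (familyPoly n A w + C c).coeff (i + 1) = (if i = 0 then A else 0) + w ⟨i, hi⟩ := by
  rw [coeff_add, coeff_C, if_neg i.succ_ne_zero, add_zero, coeff_familyPoly_succ hi]

theorem monic_familyPoly_add_C (hn : 2 ≤ n) (c : ℤ) : (familyPoly n A w + C c).Monic := by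
  rw [Monic, leadingCoeff, natDegree_familyPoly_add_C hn, coeff_add, coeff_C, if_neg (by omega),
    coeff_familyPoly_of_le hn le_rfl, if_pos rfl, add_zero]

theorem familyPoly_add_C_inj (hn : 2 ≤ n) {w' : Fin (n - 1) → ℤ} {c c' : ℤ} :
    familyPoly n A w + C c = familyPoly n A w' + C c' ↔ w = w' ∧ c = c' := by
  refine ⟨fun h => ⟨funext fun i => ?_, ?_⟩, fun h => by rw [h.1, h.2]⟩
  · have h := congr_arg (coeff · (i + 1)) h
    simp only [coeff_familyPoly_add_C_succ i.2] at h
    exact add_left_cancel h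
  · have h := congr_arg (coeff · 0) h
    simpa only [coeff_familyPoly_add_C_zero (by omega : 1 ≤ n)] using h

theorem irreducible_map_familyPoly_add_C (hn : 2 ≤ n) (hA : 2 ∣ A) (hw : ∀ i, 2 ∣ w i) {c : ℤ}
    (hc : c % 4 = 2) : Irreducible ((familyPoly n A w + C c).map (algebraMap ℤ ℚ)) := by
  refine (monic_familyPoly_add_C hn c).irreducible_map_of_eisenstein
    (by rw [natDegree_familyPoly_add_C hn]; omega) Int.prime_two (fun t ht => ?_) ?_
  · rw [natDegree_familyPoly_add_C hn] at ht
    rcases t with _ | i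
    · rw [coeff_familyPoly_add_C_zero (by omega)]
      omega
    · rw [coeff_familyPoly_add_C_succ (by omega)]
      exact dvd_add (by split_ifs <;> simp [hA]) (hw _)
  · rw [coeff_familyPoly_add_C_zero (by omega)]
    omega

theorem abs_coeff_familyPoly_add_C_le (hn : 2 ≤ n) {Q c : ℤ} (hQ : 1 ≤ Q)
    (hw : ∀ i, |A| + |w i| ≤ Q) (hc : |c| ≤ Q) (t : ℕ) :
    |(familyPoly n A w + C c).coeff t| ≤ Q := by
  rcases t with _ | i
  · rwa [coeff_familyPoly_add_C_zero (by omega)]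
  by_cases hi : i < n - 1
  · rw [coeff_familyPoly_add_C_succ hi]
    have hA : |(if i = 0 then A else 0)| ≤ |A| := by split_ifs <;> simp
    exact (abs_add_le _ _).trans ((add_le_add hA le_rfl).trans (hw ⟨i, hi⟩))
  · rw [coeff_add, coeff_C, if_neg i.succ_ne_zero, add_zero, coeff_familyPoly_of_le hn (by omega)]
    split_ifs
    · rwa [abs_one]
    · rw [abs_zero]
      omega

theorem aeval_familyPoly (x : ℝ) :
    aeval x (familyPoly n A w) = x ^ n + x * (A + ∑ i, w i * x ^ (i : ℕ)) := by
  simp [familyPoly, ofFn_eq_sum_monomial, aeval_monomial]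

theorem abs_aeval_familyPoly_sub_sub_le {x y L : ℝ} (hx : |x| ≤ 1 / 2) (hy : |y| ≤ 1 / 2)
    (hw : ∀ i, |(w i : ℝ)| ≤ L) :
    |aeval y (familyPoly n A w) - aeval x (familyPoly n A w) - A * (y - x)| ≤
      (1 + (n - 1 : ℕ) * L) * |y - x| := by
  have hsplit : aeval y (familyPoly n A w) - aeval x (familyPoly n A w) - A * (y - x) =
      (y ^ n - x ^ n) + ∑ i, (w i : ℝ) * (y ^ ((i : ℕ) + 1) - x ^ ((i : ℕ) + 1)) := by
    have hmul (z : ℝ) : z * ∑ i, (w i : ℝ) * z ^ (i : ℕ) = ∑ i, (w i : ℝ) * z ^ ((i : ℕ) + 1) := by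
      rw [Finset.mul_sum]
      exact Finset.sum_congr rfl fun i _ => by ring
    simp only [aeval_familyPoly, mul_add, hmul, mul_sub, Finset.sum_sub_distrib]
    ring
  calc _ = |(y ^ n - x ^ n) + ∑ i, (w i : ℝ) * (y ^ ((i : ℕ) + 1) - x ^ ((i : ℕ) + 1))| := by
        rw [hsplit]
    _ ≤ |y ^ n - x ^ n| + ∑ i, |(w i : ℝ)| * |y ^ ((i : ℕ) + 1) - x ^ ((i : ℕ) + 1)| := by
        refine (abs_add_le _ _).trans ?_
        gcongr
        exact (Finset.abs_sum_le_sum_abs _ _).trans_eq (Finset.sum_congr rfl fun i _ => abs_mul _ _)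
    _ ≤ |y - x| + ∑ _i : Fin (n - 1), L * |y - x| := by
        refine add_le_add (abs_pow_sub_pow_le_abs_sub hx hy n) (Finset.sum_le_sum fun i _ => ?_)
        exact mul_le_mul (hw i) (abs_pow_sub_pow_le_abs_sub hx hy _) (abs_nonneg _)
          ((abs_nonneg _).trans (hw i))
    _ = (1 + (n - 1 : ℕ) * L) * |y - x| := by
        rw [Finset.sum_const, Finset.card_univ, Fintype.card_fin, nsmul_eq_mul]
        ring

theorem abs_aeval_familyPoly_le (hn : 1 ≤ n) {y L : ℝ}
    (hy : |y| ≤ 1 / 2) (hw : ∀ i, |(w i : ℝ)| ≤ L) :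
    |aeval y (familyPoly n A w)| ≤ (|(A : ℝ)| + 1 + (n - 1 : ℕ) * L) * |y| := by
  have h := abs_aeval_familyPoly_sub_sub_le (A := A) (abs_zero.trans_le (by norm_num)) hy hw
  rw [← coeff_zero_eq_aeval_zero', coeff_familyPoly_zero hn, map_zero, sub_zero, sub_zero] at h
  calc |aeval y (familyPoly n A w)|
      ≤ |aeval y (familyPoly n A w) - A * y| + |(A : ℝ)| * |y| := by
        simpa [abs_mul] using abs_add_le (aeval y (familyPoly n A w) - A * y) (A * y)
    _ ≤ (|(A : ℝ)| + 1 + (n - 1 : ℕ) * L) * |y| := by linarith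

theorem eq_of_aeval_familyPoly_add_C_eq_zero (hn : 2 ≤ n) (hA : 2 ∣ A) {w' : Fin (n - 1) → ℤ}
    (hw : ∀ i, 2 ∣ w i) (hw' : ∀ i, 2 ∣ w' i) {c c' : ℤ} (hc : c % 4 = 2) (hc' : c' % 4 = 2)
    {α : ℝ} (hα : aeval α (familyPoly n A w + C c) = 0)
    (hα' : aeval α (familyPoly n A w' + C c') = 0) : w = w' ∧ c = c' :=
  (familyPoly_add_C_inj hn).mp <|
    (monic_familyPoly_add_C hn c).eq_of_aeval_eq_zero_of_irreducible_map
      (algebraMap ℤ ℚ).injective_int (monic_familyPoly_add_C hn c')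
      (irreducible_map_familyPoly_add_C hn hA hw hc)
      (irreducible_map_familyPoly_add_C hn hA hw' hc') hα hα'

theorem isRealAlgIntOfHt_of_aeval_familyPoly_add_C_eq_zero (hn : 2 ≤ n) (hA : 2 ∣ A)
    (hw : ∀ i, 2 ∣ w i) {c Q : ℤ} (hc : c % 4 = 2) (hQ : 1 ≤ Q) (hwQ : ∀ i, |A| + |w i| ≤ Q)
    (hcQ : |c| ≤ Q) {α : ℝ} (hα : aeval α (familyPoly n A w + C c) = 0) :
    IsRealAlgIntOfHt n Q α :=
  ⟨_, monic_familyPoly_add_C hn c, natDegree_familyPoly_add_C hn c,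
    irreducible_map_familyPoly_add_C hn hA hw hc, abs_coeff_familyPoly_add_C_le hn hQ hwQ hcQ, hα⟩

end familyPoly

noncomputable def ceilTwoModFour (y : ℝ) : ℤ := 4 * ⌈(y - 2) / 4⌉ + 2

theorem ceilTwoModFour_emod_four (y : ℝ) : ceilTwoModFour y % 4 = 2 := by
  unfold ceilTwoModFour
  omega

theorem le_ceilTwoModFour (y : ℝ) : y ≤ ceilTwoModFour y := by
  have := Int.le_ceil ((y - 2) / 4)
  unfold ceilTwoModFour
  push_cast
  linarith

theorem ceilTwoModFour_lt (y : ℝ) : (ceilTwoModFour y : ℝ) < y + 4 := by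
  have := Int.ceil_lt_add_one ((y - 2) / 4)
  unfold ceilTwoModFour
  push_cast
  linarith

theorem exists_root_add_C_ceilTwoModFour (p : ℤ[X]) {a b : ℝ} (hab : a ≤ b) {j : ℕ}
    (h : 4 * (j + 1) ≤ aeval b p - aeval a p) :
    ∃ α ∈ Set.Icc a b, aeval α (p + C (ceilTwoModFour (-aeval b p) + 4 * j)) = 0 := by
  refine intermediate_value_Icc hab (p + C _).continuous_aeval.continuousOn ?_
  have h₁ := le_ceilTwoModFour (-aeval b p)
  have h₂ := ceilTwoModFour_lt (-aeval b p)
  have hj : (0 : ℝ) ≤ j := j.cast_nonneg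
  simp only [map_add, aeval_C, algebraMap_int_eq, Int.coe_castRingHom,
    Int.cast_mul, Int.cast_ofNat, Int.cast_natCast]
  constructor <;> linarith

theorem abs_ceilTwoModFour_neg_add_le (y : ℝ) (j : ℕ) :
    |((ceilTwoModFour (-y) + 4 * j : ℤ) : ℝ)| ≤ |y| + 4 * (j + 1) := by
  have h₁ := le_ceilTwoModFour (-y)
  have h₂ := ceilTwoModFour_lt (-y)
  push_cast
  rw [abs_le]
  constructor <;> linarith [neg_abs_le y, le_abs_self y, (j.cast_nonneg : (0 : ℝ) ≤ j)]

/-- The constant term is the `j`-th integer `≡ 2 (mod 4)` above `-f(b)`, for `f` the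
non-constant part, so that the polynomial is nonnegative at `b`. -/
noncomputable def candidatePoly (n : ℕ) (A : ℤ) (b : ℝ) (κ : Fin (n - 1) → ℕ) (j : ℕ) : ℤ[X] :=
  familyPoly n A (fun i => 2 * κ i) +
    C (ceilTwoModFour (-aeval b (familyPoly n A fun i => 2 * κ i)) + 4 * j)

section candidatePoly

variable {n : ℕ} {A : ℤ} {b : ℝ} {κ : Fin (n - 1) → ℕ} {j : ℕ}

theorem abs_two_mul_natCast_le {K : ℕ} (hκ : ∀ i, κ i ≤ K) (i : Fin (n - 1)) :
    |((2 * κ i : ℤ) : ℝ)| ≤ 2 * K := by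
  push_cast
  rw [abs_of_nonneg (by positivity)]
  exact_mod_cast Nat.mul_le_mul_left 2 (hκ i)

theorem eq_of_aeval_candidatePoly_eq_zero (hn : 2 ≤ n) (hA : 2 ∣ A) {κ' : Fin (n - 1) → ℕ}
    {j' : ℕ} {α : ℝ} (h : aeval α (candidatePoly n A b κ j) = 0)
    (h' : aeval α (candidatePoly n A b κ' j') = 0) : κ = κ' ∧ j = j' := by
  have h4 := ceilTwoModFour_emod_four (-aeval b (familyPoly n A fun i => 2 * κ i))
  have h4' := ceilTwoModFour_emod_four (-aeval b (familyPoly n A fun i => 2 * κ' i))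
  obtain ⟨hκ, hj⟩ := eq_of_aeval_familyPoly_add_C_eq_zero hn hA (fun i => dvd_mul_right 2 _)
    (fun i => dvd_mul_right 2 _) (by omega) (by omega) h h'
  obtain rfl : κ = κ' := funext fun i => by simpa using congr_fun hκ i
  exact ⟨rfl, by omega⟩

theorem exists_root_candidatePoly {a : ℝ} (ha : |a| ≤ 1 / 2) (hb : |b| ≤ 1 / 2) (hab : a ≤ b)
    {K J : ℕ} (hκ : ∀ i, κ i ≤ K) (hj : j ≤ J)
    (hslope : 4 * (J + 1 : ℝ) ≤ (A - (1 + (n - 1 : ℕ) * (2 * K : ℝ))) * (b - a)) :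
    ∃ α ∈ Set.Icc a b, aeval α (candidatePoly n A b κ j) = 0 := by
  have hw := abs_two_mul_natCast_le hκ
  refine exists_root_add_C_ceilTwoModFour _ hab ?_
  have hgrowth := abs_le.mp (abs_aeval_familyPoly_sub_sub_le (A := A) ha hb hw)
  rw [abs_of_nonneg (sub_nonneg.mpr hab)] at hgrowth
  have hjJ : (j : ℝ) ≤ J := by exact_mod_cast hj
  nlinarith

theorem isRealAlgIntOfHt_of_aeval_candidatePoly_eq_zero (hn : 2 ≤ n) (hA : 2 ∣ A)
    (hb : |b| ≤ 1 / 2) {K J : ℕ} (hκ : ∀ i, κ i ≤ K) (hj : j ≤ J) {Q : ℤ}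
    (hcoeff : |A| + 2 * K ≤ Q)
    (hconst : (|(A : ℝ)| + 1 + (n - 1 : ℕ) * (2 * K : ℝ)) / 2 + 4 * (J + 1) ≤ Q) {α : ℝ}
    (hα : aeval α (candidatePoly n A b κ j) = 0) : IsRealAlgIntOfHt n Q α := by
  rw [candidatePoly] at hα
  set f := familyPoly n A fun i => 2 * (κ i : ℤ)
  have hw := abs_two_mul_natCast_le hκ
  have h4 := ceilTwoModFour_emod_four (-aeval b f)
  have hjJ : (j : ℝ) ≤ J := by exact_mod_cast hj
  have hQ : (1 : ℝ) ≤ Q := by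
    have : (0 : ℝ) ≤ (n - 1 : ℕ) * (2 * K : ℝ) := by positivity
    linarith [abs_nonneg (A : ℝ)]
  refine isRealAlgIntOfHt_of_aeval_familyPoly_add_C_eq_zero hn hA (fun i => dvd_mul_right 2 _)
    (by omega) (by exact_mod_cast hQ) (fun i => ?_) ?_ hα
  · have hwi : |(2 * κ i : ℤ)| ≤ 2 * K := by exact_mod_cast hw i
    linarith
  · have hc := abs_ceilTwoModFour_neg_add_le (aeval b f) j
    have hf := (abs_aeval_familyPoly_le (A := A) (by omega) hb hw).trans
      (mul_le_mul_of_nonneg_left hb (by positivity))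
    have hcR : |((ceilTwoModFour (-aeval b f) + 4 * j : ℤ) : ℝ)| ≤ Q := by linarith
    exact_mod_cast hcR

end candidatePoly

theorem exists_finset_isRealAlgIntOfHt {n : ℕ} (hn : 2 ≤ n) {a b : ℝ} (ha : |a| ≤ 1 / 2)
    (hb : |b| ≤ 1 / 2) (hab : a ≤ b) {A : ℤ} (hA : 2 ∣ A) {K J : ℕ} {Q : ℤ}
    (hslope : 4 * (J + 1 : ℝ) ≤ (A - (1 + (n - 1 : ℕ) * (2 * K : ℝ))) * (b - a))
    (hcoeff : |A| + 2 * K ≤ Q)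
    (hconst : (|(A : ℝ)| + 1 + (n - 1 : ℕ) * (2 * K : ℝ)) / 2 + 4 * (J + 1) ≤ Q) :
    ∃ S : Finset ℝ, (∀ α ∈ S, α ∈ Set.Icc a b ∧ IsRealAlgIntOfHt n Q α) ∧
      S.card = (K + 1) ^ (n - 1) * (J + 1) := by
  set T := (Fintype.piFinset fun _ : Fin (n - 1) => Finset.range (K + 1)) ×ˢ Finset.range (J + 1)
  have hT : ∀ t ∈ T, (∀ i, t.1 i ≤ K) ∧ t.2 ≤ J := by
    simp [T]
  obtain ⟨S, hS, hcard⟩ := T.exists_card_eq_of_exists_of_unique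
    (fun t α => α ∈ Set.Icc a b ∧ aeval α (candidatePoly n A b t.1 t.2) = 0)
    (fun t ht => exists_root_candidatePoly ha hb hab (hT t ht).1 (hT t ht).2 hslope)
    (fun t _ t' _ _ h h' => Prod.ext_iff.mpr (eq_of_aeval_candidatePoly_eq_zero hn hA h.2 h'.2))
  refine ⟨S, fun α hα => ?_, by simp [hcard, T]⟩
  obtain ⟨t, ht, hαI, hα⟩ := hS α hα
  exact ⟨hαI, isRealAlgIntOfHt_of_aeval_candidatePoly_eq_zero hn hA hb (hT t ht).1 (hT t ht).2
    hcoeff hconst hα⟩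

theorem inv_pow_mul_pow_mul_le_box_card {n Q : ℕ} (hn : 1 ≤ n) {ℓ : ℝ} (hℓ : 0 ≤ ℓ) :
    (32 * n : ℝ)⁻¹ ^ n * Q ^ n * ℓ ≤ ((Q / (32 * n) + 1) ^ (n - 1) * (⌊Q * ℓ / 32⌋₊ + 1) : ℕ) := by
  have hK : (Q : ℝ) / (32 * n) ≤ (Q / (32 * n) : ℕ) + 1 := by
    rw [div_le_iff₀ (by positivity)]
    exact_mod_cast ((Nat.lt_mul_div_succ Q (by omega : 0 < 32 * n)).trans_eq (by ring)).le
  have hJ : (Q : ℝ) / (32 * n) * ℓ ≤ ⌊Q * ℓ / 32⌋₊ + 1 := by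
    calc (Q : ℝ) / (32 * n) * ℓ ≤ Q / 32 * ℓ := by
          gcongr
          linarith [(by exact_mod_cast hn : (1 : ℝ) ≤ n)]
      _ ≤ ⌊Q * ℓ / 32⌋₊ + 1 := by linarith [Nat.lt_floor_add_one (Q * ℓ / 32)]
  calc (32 * n : ℝ)⁻¹ ^ n * Q ^ n * ℓ = (Q / (32 * n) : ℝ) ^ (n - 1) * (Q / (32 * n) * ℓ) := by
        rw [← mul_assoc, pow_sub_one_mul (by omega), div_eq_inv_mul, mul_pow]
    _ ≤ _ := by
        push_cast
        gcongr

theorem exists_finset_isRealAlgIntOfHt_of_le_mul {n : ℕ} (hn : 2 ≤ n) {Q : ℕ} (hQ : 16 < Q)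
    {a b : ℝ} (hab : Set.Icc a b ⊆ Set.Icc (-(1 / 2)) (1 / 2)) (hlen : 32 ≤ Q * (b - a)) :
    ∃ S : Finset ℝ, (∀ α ∈ S, α ∈ Set.Icc a b ∧ IsRealAlgIntOfHt n Q α) ∧
      (32 * n : ℝ)⁻¹ ^ n * Q ^ n * (b - a) ≤ S.card := by
  have hQ' : (16 : ℝ) < Q := by exact_mod_cast hQ
  have hba : 0 < b - a := by nlinarith
  obtain ⟨ha₁, ha₂⟩ := hab ⟨le_rfl, by linarith⟩
  obtain ⟨hb₁, hb₂⟩ := hab ⟨by linarith, le_rfl⟩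
  set q := Q / 4
  set K := Q / (32 * n)
  set J := ⌊Q * (b - a) / 32⌋₊
  have hq : 4 * q ≤ Q ∧ Q < 4 * q + 4 := by omega
  have hqR : (4 * q : ℝ) ≤ Q ∧ (Q : ℝ) < 4 * q + 4 := by exact_mod_cast hq
  have hK : 32 * n * K ≤ Q := Nat.mul_div_le Q (32 * n)
  have hK64 : 64 * K ≤ Q := (Nat.mul_le_mul_right K (by omega : 64 ≤ 32 * n)).trans hK
  have hnK : ((n - 1 : ℕ) : ℝ) * (2 * K) ≤ Q / 16 := by
    have : (32 * n * K : ℝ) ≤ Q := by exact_mod_cast hK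
    have : ((n - 1 : ℕ) : ℝ) ≤ n := by exact_mod_cast Nat.sub_le n 1
    nlinarith [(K.cast_nonneg : (0 : ℝ) ≤ K)]
  have hJ : (J : ℝ) ≤ Q * (b - a) / 32 := Nat.floor_le (by positivity)
  -- `A = 2q ≈ Q/2` against `(n - 1)·2K ≤ Q/16`: slope `≥ Q/4 ≥ 4(J + 1)/(b - a)`,
  -- and all coefficients stay `≤ Q`.
  obtain ⟨S, hS, hcard⟩ := exists_finset_isRealAlgIntOfHt (A := 2 * q) (K := K) (J := J) (Q := Q)
    hn (abs_le.mpr ⟨ha₁, by linarith⟩) (abs_le.mpr ⟨by linarith, hb₂⟩) (by linarith)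
    (dvd_mul_right _ _) (by push_cast; nlinarith) (by rw [abs_of_nonneg (by positivity)]; omega)
    (by rw [abs_of_nonneg (by positivity)]; push_cast; nlinarith)
  exact ⟨S, hS, hcard ▸ inv_pow_mul_pow_mul_le_box_card (by omega) hba.le⟩

/-- For every `n ≥ 2` there are constants `c₃, c₄ > 0` and `Q₀` such that for every
integer `Q > Q₀`, every interval `I = [a,b] ⊆ [-1/2, 1/2]` of length at least `c₃·Q⁻¹`
contains at least `c₄·Qⁿ·|I|` real algebraic integers of degree `n` and height at most `Q`. -/
theorem algebraic_integers_in_short_intervals (n : ℕ) (hn : 2 ≤ n) :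
    ∃ c₃ > (0 : ℝ), ∃ c₄ > (0 : ℝ), ∃ Q₀ : ℕ, ∀ Q : ℕ, Q₀ < Q →
      ∀ a b : ℝ, Set.Icc a b ⊆ Set.Icc (-(1/2) : ℝ) (1/2) →
        c₃ / (Q : ℝ) ≤ b - a →
        ∃ S : Finset ℝ,
          (∀ α ∈ S, α ∈ Set.Icc a b ∧ IsRealAlgIntOfHt n (Q : ℤ) α) ∧
          c₄ * (Q : ℝ) ^ n * (b - a) ≤ (S.card : ℝ) := by
  refine ⟨32, by norm_num, (32 * n : ℝ)⁻¹ ^ n, by positivity, 16, fun Q hQ a b hab hlen => ?_⟩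
  have hQpos : (0 : ℝ) < Q := by exact_mod_cast (by omega : 0 < Q)
  exact exists_finset_isRealAlgIntOfHt_of_le_mul hn hQ hab (by rwa [div_le_iff₀' hQpos] at hlen)
end

section
/- Let P be a polynomial of degree n ≥ 1 with complex roots α₁, α₂, …, αₙ (listed with multiplicity), and let x ∈ ℝ be a point with P'(x) ≠ 0. If α₁ is a root nearest to x, i.e., |x - α₁| = min over 1 ≤ i ≤ n of |x - αᵢ|, then |x - α₁| ≤ n·|P(x)|·|P'(x)|^{-1}. -/
/-!
At a point `z` that is not a root, the logarithmic derivative of a split polynomial is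
`P'(z) / P(z) = ∑ᵣ 1 / (z - r)` over its roots `r`, and each term has norm at most `1 / d`,
where `d` is the distance from `z` to the nearest root. Hence `‖P'(z)‖ · d ≤ n · ‖P(z)‖`.
-/

open Polynomial

lemma norm_inv_mul_le_one_of_le_norm {K : Type*} [NormedDivisionRing K] {w : K} {d : ℝ}
    (hd : d ≤ ‖w‖) : ‖w⁻¹‖ * d ≤ 1 :=
  calc ‖w⁻¹‖ * d ≤ ‖w‖⁻¹ * ‖w‖ := by rw [norm_inv]; gcongr
    _ ≤ 1 := inv_mul_le_one

namespace Polynomial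

theorem roots_C_mul_prod_X_sub_C {R ι : Type*} [CommRing R] [IsDomain R] [Fintype ι] {c : R}
    (hc : c ≠ 0) (α : ι → R) :
    (C c * ∏ i, (X - C (α i))).roots = Finset.univ.val.map α := by
  rw [roots_C_mul _ hc, Finset.prod_eq_multiset_prod]
  simpa only [Multiset.map_map, Function.comp_def] using
    roots_multiset_prod_X_sub_C (Finset.univ.val.map α)

variable {K : Type*} [NormedField K]

theorem Splits.norm_eval_derivative_mul_le {f : K[X]} (hf : f.Splits) {z : K} {d : ℝ}
    (hd₀ : 0 ≤ d) (hd : ∀ r ∈ f.roots, d ≤ ‖z - r‖) :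
    ‖f.derivative.eval z‖ * d ≤ f.roots.card * ‖f.eval z‖ := by
  by_cases hz : f.eval z = 0
  · rcases eq_or_ne f 0 with rfl | hf0
    · simp
    have hd_eq : d = 0 := le_antisymm (by simpa using hd z ((mem_roots hf0).2 hz)) hd₀
    rw [hd_eq, mul_zero]
    positivity
  rw [hf.eval_derivative_eq_eval_mul_sum hz, norm_mul, mul_comm (f.roots.card : ℝ), mul_assoc]
  gcongr
  calc ‖(f.roots.map fun r ↦ 1 / (z - r)).sum‖ * d
      ≤ (f.roots.map fun r ↦ ‖(z - r)⁻¹‖).sum * d := by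
        gcongr
        simpa [Multiset.map_map] using norm_multiset_sum_le (f.roots.map fun r ↦ 1 / (z - r))
    _ = (f.roots.map fun r ↦ ‖(z - r)⁻¹‖ * d).sum := Multiset.sum_map_mul_right.symm
    _ ≤ (f.roots.map fun _ ↦ (1 : ℝ)).sum :=
        Multiset.sum_map_le_sum_map _ _ fun r hr ↦ norm_inv_mul_le_one_of_le_norm (hd r hr)
    _ = f.roots.card := by simp

end Polynomial

theorem dist_to_nearest_root_le_general (n : ℕ) (hn : 1 ≤ n) (P : Polynomial ℂ)
    (α : Fin n → ℂ)
    (hroots : P = C P.leadingCoeff * ∏ i, (X - C (α i)))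
    (x : ℝ) (hderiv : P.derivative.eval (x : ℂ) ≠ 0)
    (hmin : ∀ i, ‖(x : ℂ) - α ⟨0, hn⟩‖ ≤ ‖(x : ℂ) - α i‖) :
    ‖(x : ℂ) - α ⟨0, hn⟩‖ ≤
      (n : ℝ) * ‖P.eval (x : ℂ)‖ / ‖P.derivative.eval (x : ℂ)‖ := by
  have hP0 : P ≠ 0 := by
    rintro rfl
    simp at hderiv
  have hroots' : P.roots = Finset.univ.val.map α := by
    rw [hroots, roots_C_mul_prod_X_sub_C (leadingCoeff_ne_zero.2 hP0)]
  have hbound := (IsAlgClosed.splits P).norm_eval_derivative_mul_le (norm_nonneg _)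
    (by simpa [hroots'] using hmin)
  rw [hroots', Multiset.card_map, Finset.card_val, Finset.card_univ, Fintype.card_fin] at hbound
  rw [le_div_iff₀ (norm_pos_iff.2 hderiv)]
  linarith

/-- If `P` is a polynomial of degree `n ≥ 1` with roots `α 0, …, α (n-1)` (with
multiplicity), `x` is a real point with `P'(x) ≠ 0`, and `α 0` is a root nearest to `x`,
then `|x - α 0| ≤ n·|P(x)|/|P'(x)|`. -/
theorem dist_to_nearest_root_le (n : ℕ) (hn : 1 ≤ n) (P : Polynomial ℂ)
    (hP : P.natDegree = n) (α : Fin n → ℂ)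
    (hroots : P = C P.leadingCoeff * ∏ i, (X - C (α i)))
    (x : ℝ) (hderiv : P.derivative.eval (x : ℂ) ≠ 0)
    (hmin : ∀ i, ‖(x : ℂ) - α ⟨0, hn⟩‖ ≤ ‖(x : ℂ) - α i‖) :
    ‖(x : ℂ) - α ⟨0, hn⟩‖ ≤
      (n : ℝ) * ‖P.eval (x : ℂ)‖ / ‖P.derivative.eval (x : ℂ)‖ :=
  dist_to_nearest_root_le_general n hn P α hroots x hderiv hmin
end

section
/- Let n ≥ 1, let P₁, …, Pₙ ∈ ℤ[t] be polynomials of degree at most n - 1, write Pᵢ(t) = a_{i,n-1}t^{n-1} + … + a_{i,1}t + a_{i,0}, and let A = (a_{i,j}) be the n × n matrix of their coefficients. Let p be a prime that does not divide det A, and let θ₁, …, θₙ ∈ ℝ. Then there exist integers t₁, …, tₙ with |θᵢ - tᵢ| ≤ 1 for all i such that the monic polynomial P(t) = tⁿ + p·(t₁P₁(t) + … + tₙPₙ(t)) is irreducible over ℚ. -/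
/-!
Since `p ∤ det A`, the column of constant coefficients of `A` is not divisible by `p`, say
`p ∤ a_{i₀,0}`. Rounding every `θᵢ` down and, if necessary, raising `t_{i₀}` by one makes
`p ∤ Σᵢ tᵢ a_{i,0}`. Then `tⁿ + p·Σᵢ tᵢ Pᵢ` is monic, all its lower coefficients are divisible by
`p`, and its constant term is `p` times a number prime to `p`: it is Eisenstein at `p`.
-/

open Polynomial

theorem Matrix.dvd_det_of_forall_dvd_col {ι R : Type*} [Fintype ι] [DecidableEq ι] [CommRing R]
    {M : Matrix ι ι R} {a : R} (j : ι) (h : ∀ i, a ∣ M i j) : a ∣ M.det := by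
  rw [Matrix.det_apply']
  exact Finset.dvd_sum fun σ _ =>
    dvd_mul_of_dvd_right
      ((h (σ j)).trans (Finset.dvd_prod_of_mem (fun i => M (σ i) i) (Finset.mem_univ j))) _

theorem abs_sub_floor_add_le {x : ℝ} {e : ℤ} (he₀ : 0 ≤ e) (he₁ : e ≤ 1) :
    |x - ((⌊x⌋ + e : ℤ) : ℝ)| ≤ 1 := by
  have h₀ : (⌊x⌋ : ℝ) ≤ x := Int.floor_le x
  have h₁ : x < ⌊x⌋ + 1 := Int.lt_floor_add_one x
  have he₀' : (0 : ℝ) ≤ e := by exact_mod_cast he₀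
  have he₁' : (e : ℝ) ≤ 1 := by exact_mod_cast he₁
  rw [abs_le]
  push_cast
  constructor <;> linarith

theorem exists_int_near_not_dvd_sum_mul {ι : Type*} [Fintype ι] [DecidableEq ι] (θ : ι → ℝ)
    (a : ι → ℤ) {d : ℤ} {i₀ : ι} (hi₀ : ¬ d ∣ a i₀) :
    ∃ t : ι → ℤ, (∀ i, |θ i - (t i : ℝ)| ≤ 1) ∧ ¬ d ∣ ∑ i, t i * a i := by
  by_cases hfloor : d ∣ ∑ i, ⌊θ i⌋ * a i
  · refine ⟨fun i => ⌊θ i⌋ + if i = i₀ then 1 else 0, fun i => ?_, ?_⟩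
    · exact abs_sub_floor_add_le (by split_ifs <;> norm_num) (by split_ifs <;> norm_num)
    · have hsum : ∑ i, (⌊θ i⌋ + if i = i₀ then 1 else 0) * a i = ∑ i, ⌊θ i⌋ * a i + a i₀ := by
        simp only [add_mul, ite_mul, one_mul, zero_mul, Finset.sum_add_distrib,
          Finset.sum_ite_eq', Finset.mem_univ, if_true]
      rw [hsum]
      exact fun h => hi₀ ((dvd_add_right hfloor).mp h)
  · refine ⟨fun i => ⌊θ i⌋, fun i => ?_, hfloor⟩
    simpa using abs_sub_floor_add_le (x := θ i) le_rfl zero_le_one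

section Eisenstein

variable {R : Type*} [CommRing R] {n : ℕ} {G : R[X]}

theorem degree_C_mul_lt (a : R) (hG : G.degree < n) : (C a * G).degree < n :=
  (smul_eq_C_mul a ▸ degree_smul_le a G).trans_lt hG

theorem natDegree_X_pow_add_C_mul [Nontrivial R] (a : R) (hG : G.degree < n) :
    (X ^ n + C a * G).natDegree = n :=
  natDegree_eq_of_degree_eq_some <| by
    rw [degree_add_eq_left_of_degree_lt (by rw [degree_X_pow]; exact degree_C_mul_lt a hG),
      degree_X_pow]

theorem coeff_X_pow_add_C_mul_of_lt (a : R) {k : ℕ} (hk : k < n) :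
    (X ^ n + C a * G).coeff k = a * G.coeff k := by
  simp [coeff_X_pow, hk.ne]

variable [IsDomain R] {p : R}

theorem isEisensteinAt_X_pow_add_C_mul (hp : Prime p) (hn : 0 < n) (hG : G.degree < n)
    (h₀ : ¬ p ∣ G.coeff 0) : (X ^ n + C p * G).IsEisensteinAt (Ideal.span {p}) := by
  refine (monic_X_pow_add (degree_C_mul_lt p hG)).isEisensteinAt_of_mem_of_notMem
    (Ideal.span_singleton_eq_top.not.mpr hp.not_isUnit) (fun {k} hk => ?_) ?_
  · rw [natDegree_X_pow_add_C_mul p hG] at hk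
    rw [coeff_X_pow_add_C_mul_of_lt p hk, Ideal.mem_span_singleton]
    exact dvd_mul_right p _
  · rw [coeff_X_pow_add_C_mul_of_lt p hn, Ideal.span_singleton_pow, Ideal.mem_span_singleton,
      pow_two, mul_dvd_mul_iff_left hp.ne_zero]
    exact h₀

theorem irreducible_map_X_pow_add_C_mul (K : Type*) [Field K] [Algebra R K] [IsFractionRing R K]
    [IsIntegrallyClosed R] (hp : Prime p) (hn : 0 < n) (hG : G.degree < n)
    (h₀ : ¬ p ∣ G.coeff 0) : Irreducible ((X ^ n + C p * G).map (algebraMap R K)) := by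
  have hmonic := monic_X_pow_add (degree_C_mul_lt p hG)
  refine hmonic.irreducible_iff_irreducible_map_fraction_map.mp ?_
  refine (isEisensteinAt_X_pow_add_C_mul hp hn hG h₀).irreducible
    ((Ideal.span_singleton_prime hp.ne_zero).mpr hp) hmonic.isPrimitive ?_
  rwa [natDegree_X_pow_add_C_mul p hG]

end Eisenstein

/-- Let `P₁, …, Pₙ ∈ ℤ[t]` have degree at most `n - 1` and coefficient matrix
`A = (a_{i,j})`, let `p` be a prime not dividing `det A`, and let `θ₁, …, θₙ ∈ ℝ`.
Then there are integers `t₁, …, tₙ` with `|θᵢ - tᵢ| ≤ 1` such that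
`tⁿ + p·(t₁P₁ + … + tₙPₙ)` is irreducible over `ℚ`. -/
theorem exists_integer_shift_eisenstein_irreducible (n : ℕ) (hn : 1 ≤ n)
    (P : Fin n → ℤ[X]) (hdeg : ∀ i, (P i).natDegree ≤ n - 1)
    (p : ℕ) (hp : p.Prime)
    (hnd : ¬ ((p : ℤ) ∣ (Matrix.of fun i j : Fin n => (P i).coeff (j : ℕ)).det))
    (θ : Fin n → ℝ) :
    ∃ t : Fin n → ℤ, (∀ i, |θ i - (t i : ℝ)| ≤ 1) ∧
      Irreducible ((X ^ n + C (p : ℤ) * ∑ i, C (t i) * P i).map (algebraMap ℤ ℚ)) := by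
  obtain ⟨i₀, hi₀⟩ : ∃ i₀, ¬ (p : ℤ) ∣ (P i₀).coeff 0 := by
    by_contra! h
    exact hnd (Matrix.dvd_det_of_forall_dvd_col ⟨0, hn⟩ h)
  obtain ⟨t, hclose, hsum⟩ := exists_int_near_not_dvd_sum_mul θ (fun i => (P i).coeff 0) hi₀
  refine ⟨t, hclose, irreducible_map_X_pow_add_C_mul ℚ (Nat.prime_iff_prime_int.mp hp) hn ?_ ?_⟩
  · have hnat : (∑ i, C (t i) * P i).natDegree ≤ n - 1 :=
      natDegree_sum_le_of_forall_le _ _ fun i _ => (natDegree_C_mul_le _ _).trans (hdeg i)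
    exact degree_le_natDegree.trans_lt (by exact_mod_cast hnat.trans_lt (Nat.sub_one_lt_of_lt hn))
  · simpa [finsetSum_coeff] using hsum
end

section
/- Let n ≥ 4, let P₁, …, Pₙ be polynomials of degree at most n - 1 with real coefficients, write Pᵢ(t) = Σ_{j=0}^{n-1} a_{i,j} t^j, and let A = (a_{i,j})_{1 ≤ i ≤ n, 0 ≤ j ≤ n-1} be their coefficient matrix. For any reals x₀, y₀, let M be the n × n matrix whose i-th column is (Pᵢ(x₀), Pᵢ(y₀), Pᵢ'(x₀), Pᵢ'(y₀), a_{i,4}, a_{i,5}, …, a_{i,n-1})ᵀ. Then |det M| = (y₀ - x₀)⁴·|det A|. In particular, if the Pᵢ are linearly independent and x₀ ≠ y₀, then det M ≠ 0. -/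
/-!
Each row of `M` is a linear functional on `ℝ[X]` (evaluation at `x₀`, `y₀`, evaluation of the
derivative there, then the coefficient of `X ^ r`) applied to the `Pᵢ`. Expanding the `Pᵢ` in
the monomial basis gives `M = B * Aᵀ`, where `B` records these functionals on `1, X, …, X ^ (n-1)`.
The last `n - 4` rows of `B` are standard unit vectors, so `det B` is the determinant of the
`4 × 4` confluent Vandermonde matrix of the nodes `x₀, x₀, y₀, y₀`, namely `-(y₀ - x₀) ^ 4`.
-/

open Polynomial
open scoped Matrix

namespace Polynomial

section CommSemiring

variable {R : Type*} [CommSemiring R]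

theorem linearMap_apply_eq_sum_fin {M : Type*} [AddCommMonoid M] [Module R M]
    (φ : R[X] →ₗ[R] M) {p : R[X]} {n : ℕ} (hp : p.natDegree < n) :
    φ p = ∑ j : Fin n, p.coeff j • φ (X ^ (j : ℕ)) := by
  conv_lhs => rw [p.as_sum_range_C_mul_X_pow' hp]
  simp only [map_sum, ← smul_eq_C_mul, map_smul]
  exact (Fin.sum_univ_eq_sum_range (fun j => p.coeff j • φ (X ^ j)) n).symm

theorem matrix_of_linearMap_apply_eq_mul {ι κ : Type*} [Fintype κ] (φ : ι → R[X] →ₗ[R] R)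
    (P : κ → R[X]) {n : ℕ} (hP : ∀ i, (P i).natDegree < n) :
    Matrix.of (fun r i => φ r (P i)) =
      Matrix.of (fun r (j : Fin n) => φ r (X ^ (j : ℕ))) *
        (Matrix.of fun i (j : Fin n) => (P i).coeff j)ᵀ := by
  ext r i
  simp [Matrix.mul_apply, linearMap_apply_eq_sum_fin (φ r) (hP i), mul_comm]

noncomputable def twoPointHermiteFunctional (x y : R) (r : ℕ) : R[X] →ₗ[R] R :=
  if r = 0 then leval x
  else if r = 1 then leval y
  else if r = 2 then leval x ∘ₗ derivative
  else if r = 3 then leval y ∘ₗ derivative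
  else lcoeff R r

theorem twoPointHermiteFunctional_of_four_le (x y : R) {r : ℕ} (hr : 4 ≤ r) :
    twoPointHermiteFunctional x y r = lcoeff R r := by
  simp only [twoPointHermiteFunctional, if_neg (show r ≠ 0 by omega),
    if_neg (show r ≠ 1 by omega), if_neg (show r ≠ 2 by omega), if_neg (show r ≠ 3 by omega)]

end CommSemiring

theorem det_coeff_ne_zero_of_linearIndependent {K : Type*} [Field K] {n : ℕ} {P : Fin n → K[X]}
    (hP : ∀ i, (P i).natDegree < n) (hli : LinearIndependent K P) :
    (Matrix.of fun i (j : Fin n) => (P i).coeff j).det ≠ 0 := by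
  have hmem : ∀ i, P i ∈ degreeLT K n := fun i =>
    mem_degreeLT.2 (degree_le_natDegree.trans_lt (WithBot.coe_lt_coe.2 (hP i)))
  let Q : Fin n → degreeLT K n := fun i => ⟨P i, hmem i⟩
  have hQ : LinearIndependent K Q := LinearIndependent.of_comp (degreeLT K n).subtype hli
  have hrows := hQ.map' _ (degreeLTEquiv K n).ker
  exact ((Matrix.isUnit_iff_isUnit_det _).1
    (Matrix.linearIndependent_rows_iff_isUnit.1 hrows)).ne_zero

end Polynomial

theorem Matrix.det_eq_det_submatrix_castAdd_of_rows_natAdd {R : Type*} [CommRing R] {k m : ℕ}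
    (B : Matrix (Fin (k + m)) (Fin (k + m)) R)
    (hB : ∀ r : Fin m, B (Fin.natAdd k r) = Pi.single (Fin.natAdd k r) 1) :
    B.det = (B.submatrix (Fin.castAdd m) (Fin.castAdd m)).det := by
  have hblocks : B.submatrix finSumFinEquiv finSumFinEquiv =
      Matrix.fromBlocks (B.submatrix (Fin.castAdd m) (Fin.castAdd m))
        (B.submatrix (Fin.castAdd m) (Fin.natAdd k)) 0 1 := by
    ext (r | r) (j | j) <;> simp [hB, Matrix.one_apply, Pi.single_apply, Fin.ext_iff, eq_comm]
    omega
  rw [← Matrix.det_submatrix_equiv_self finSumFinEquiv B, hblocks,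
    Matrix.det_fromBlocks_zero₂₁, Matrix.det_one, mul_one]

theorem Matrix.det_twoPointHermite {R : Type*} [CommRing R] (x y : R) :
    (!![1, x, x ^ 2, x ^ 3; 1, y, y ^ 2, y ^ 3; 0, 1, 2 * x, 3 * x ^ 2;
      0, 1, 2 * y, 3 * y ^ 2] : Matrix (Fin 4) (Fin 4) R).det = -(y - x) ^ 4 := by
  simp [Matrix.det_succ_row_zero, Fin.sum_univ_succ, Fin.succAbove]
  ring

theorem Polynomial.det_twoPointHermiteFunctional_X_pow {R : Type*} [CommRing R] (x y : R)
    (m : ℕ) :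
    (Matrix.of fun (r j : Fin (4 + m)) =>
      twoPointHermiteFunctional x y r (X ^ (j : ℕ))).det = -(y - x) ^ 4 := by
  rw [Matrix.det_eq_det_submatrix_castAdd_of_rows_natAdd, ← Matrix.det_twoPointHermite x y]
  · congr 1
    ext r j
    simp only [Matrix.submatrix_apply, Matrix.of_apply, Fin.val_castAdd]
    fin_cases r <;> fin_cases j <;> norm_num [twoPointHermiteFunctional]
  · intro r
    ext j
    simp [twoPointHermiteFunctional_of_four_le, coeff_X_pow, Pi.single_apply, Fin.ext_iff,
      eq_comm]

/-- Determinant identity: for polynomials `P₁, …, Pₙ` of degree at most `n - 1` with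
coefficient matrix `A`, and the matrix `M` whose `i`-th column is
`(Pᵢ(x₀), Pᵢ(y₀), Pᵢ'(x₀), Pᵢ'(y₀), a_{i,4}, …, a_{i,n-1})ᵀ`, one has
`|det M| = (y₀ - x₀)⁴·|det A|`; in particular, if the `Pᵢ` are linearly independent and
`x₀ ≠ y₀`, then `det M ≠ 0`. -/
theorem det_eval_matrix_eq (n : ℕ) (hn : 4 ≤ n) (P : Fin n → Polynomial ℝ)
    (hdeg : ∀ i, (P i).natDegree ≤ n - 1) (x₀ y₀ : ℝ)
    (A : Matrix (Fin n) (Fin n) ℝ) (hA : A = Matrix.of fun i j : Fin n => (P i).coeff (j : ℕ))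
    (M : Matrix (Fin n) (Fin n) ℝ)
    (hM : M = Matrix.of fun r i : Fin n =>
      if (r : ℕ) = 0 then (P i).eval x₀
      else if (r : ℕ) = 1 then (P i).eval y₀
      else if (r : ℕ) = 2 then ((P i).derivative).eval x₀
      else if (r : ℕ) = 3 then ((P i).derivative).eval y₀
      else (P i).coeff (r : ℕ)) :
    |M.det| = (y₀ - x₀) ^ 4 * |A.det| ∧
      (LinearIndependent ℝ P → x₀ ≠ y₀ → M.det ≠ 0) := by
  obtain ⟨m, rfl⟩ : ∃ m, n = 4 + m := ⟨n - 4, by omega⟩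
  have hP : ∀ i, (P i).natDegree < 4 + m := fun i => by have := hdeg i; omega
  have hM' :
      M = Matrix.of fun (r i : Fin (4 + m)) => twoPointHermiteFunctional x₀ y₀ r (P i) := by
    ext r i
    simp only [hM, Matrix.of_apply, twoPointHermiteFunctional]
    split_ifs <;> rfl
  have hdet : M.det = -(y₀ - x₀) ^ 4 * A.det := by
    rw [hM', matrix_of_linearMap_apply_eq_mul _ _ hP, Matrix.det_mul, Matrix.det_transpose,
      det_twoPointHermiteFunctional_X_pow, hA]
  refine ⟨by rw [hdet, abs_mul, abs_neg, abs_of_nonneg (by positivity)], fun hli hxy => ?_⟩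
  rw [hdet, hA]
  exact mul_ne_zero (neg_ne_zero.2 (pow_ne_zero _ (sub_ne_zero.2 hxy.symm)))
    (det_coeff_ne_zero_of_linearIndependent hP hli)
end
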